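/- Fix integers n ≥ 1 and even m ≥ 2, set N = m·n, and let g_A, g_B be the permutations of ℤ/Nℤ defined in the context. Then the intersection of Cayley geodesics Γ(g_A,g_B) ∩ Γ(g_A,e) consists of the single element g_A: the only permutation k of ℤ/Nℤ satisfying both d(g_A,k) + d(k,g_B) = d(g_A,g_B) and d(g_A,k) + d(k,e) = d(g_A,e) is k = g_A. -/

import Mathlib

/-!
Multiplying a permutation by a transposition `(a b)` splits the cycle through `a` and `b` when
they share one and merges their two cycles otherwise, so the cycle count changes by exactly one
and `N - #g` is subadditive. If `k ≠ g_A` lies on both geodesics, take `a` moved by `g_A k⁻¹` and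
`b = g_A k⁻¹ a`: the transposition `(a b)` shortens `g_A k⁻¹`, and additivity of the distances
along each geodesic forces `a` and `b` into a common cycle of `g_A` and of `g_A g_B⁻¹`. But `g_A`
preserves the block index of `z - m/2` and `g_A g_B⁻¹` preserves `z mod m`, and these two
coordinates determine `z`, so `a = b`.
-/

noncomputable def cycleCount {α : Type*} (g : Equiv.Perm α) : ℕ :=
  Nat.card (Quotient (Setoid.mk g.SameCycle
    ⟨fun x => Equiv.Perm.SameCycle.refl g x,
     fun h => h.symm,
     fun h₁ h₂ => h₁.trans h₂⟩))

/-- The Cayley distance `d(g,h) = N - #(g h⁻¹)` on the permutations of a finite set. -/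
noncomputable def cayley {α : Type*} (g h : Equiv.Perm α) : ℕ :=
  Nat.card α - cycleCount (g * h⁻¹)

/-- `Γ(g,h)`: the set of permutations on the Cayley geodesic between `g` and `h`. -/
def geodesic {α : Type*} (g h : Equiv.Perm α) : Set (Equiv.Perm α) :=
  {k | cayley g k + cayley k h = cayley g h}

open Equiv Equiv.Perm

theorem Setoid.card_quotient_eq_add_one_of_merge {α : Type*} [Finite α] {r s : Setoid α}
    {a b : α} (hab : ¬ r a b)
    (hs : ∀ p q, s p q ↔ r p q ∨ ((r p a ∨ r p b) ∧ (r q a ∨ r q b))) :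
    Nat.card (Quotient r) = Nat.card (Quotient s) + 1 := by
  classical
  have hb_congr : ∀ p q, r p q → (r p b ↔ r q b) :=
    fun p q hpq => ⟨r.trans' (r.symm hpq), r.trans' hpq⟩
  let F : Quotient r → Option (Quotient s) := Quotient.lift
    (fun p => if r p b then none else some (Quotient.mk s p)) fun p q hpq => by
      simp only [hb_congr p q hpq]
      split_ifs
      · rfl
      · exact congrArg some (Quotient.sound ((hs p q).2 (.inl hpq)))
  have hF : ∀ p, F (Quotient.mk r p) = if r p b then none else some (Quotient.mk s p) :=
    fun _ => rfl
  have hF_bij : F.Bijective := by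
    constructor
    · intro c d hcd
      obtain ⟨p, rfl⟩ := Quotient.mk_surjective c
      obtain ⟨q, rfl⟩ := Quotient.mk_surjective d
      apply Quotient.sound
      rw [hF, hF] at hcd
      by_cases hp : r p b <;> by_cases hq : r q b <;> simp only [hp, hq, if_true, if_false,
        reduceCtorEq, Option.some_inj] at hcd
      · exact r.trans' hp (r.symm hq)
      · rcases (hs p q).1 (Quotient.exact hcd) with hpq | ⟨hpa, hqa⟩
        · exact hpq
        · exact r.trans' (hpa.resolve_right hp) (r.symm (hqa.resolve_right hq))
    · rintro (_ | d)
      · exact ⟨Quotient.mk r b, by rw [hF, if_pos (r.refl' b)]⟩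
      obtain ⟨q, rfl⟩ := Quotient.mk_surjective d
      by_cases hq : r q b
      · refine ⟨Quotient.mk r a, ?_⟩
        rw [hF, if_neg hab]
        exact congrArg some (Quotient.sound ((hs a q).2 (.inr ⟨.inl (r.refl' a), .inr hq⟩)))
      · exact ⟨Quotient.mk r q, by rw [hF, if_neg hq]⟩
  rw [Nat.card_eq_of_bijective F hF_bij, Finite.card_option]

namespace Equiv.Perm

variable {α : Type*} {f g : Perm α} {a b x y : α}

theorem SameCycle.mem_of_mapsTo [Finite α] {s : Set α} (hs : Set.MapsTo f s s)
    (h : f.SameCycle x y) (hx : x ∈ s) : y ∈ s := by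
  obtain ⟨i, -, rfl⟩ := h.exists_pow_eq'
  rw [coe_pow]
  exact hs.iterate i hx

theorem SameCycle.apply_eq_of_forall_apply_eq [Finite α] {β : Type*} {φ : α → β}
    (hφ : ∀ z, φ (f z) = φ z) (h : f.SameCycle x y) : φ x = φ y :=
  h.mem_of_mapsTo (s := {z | φ x = φ z}) (fun z hz => hz.trans (hφ z).symm) _root_.rfl

theorem SameCycle.of_forall_sameCycle_apply [Finite α]
    (hfg : ∀ z, g.SameCycle z (f z)) (h : f.SameCycle x y) : g.SameCycle x y :=
  h.mem_of_mapsTo (s := {z | g.SameCycle x z}) (fun z hz => hz.trans (hfg z)) .rfl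

variable [DecidableEq α]

theorem sameCycle_swap_mul_of_not_sameCycle [Finite α] (h : ¬ g.SameCycle a b) :
    (swap a b * g).SameCycle b a := by
  set s := {z | g.SameCycle a z → (swap a b * g).SameCycle b z}
  -- `swap a b * g` sends `g⁻¹ a` to `b`; follow the `g`-cycle of `a` backwards from there.
  have hs : Set.MapsTo g.symm s s := by
    intro z hz haz
    rw [sameCycle_symm_apply_right] at haz
    rw [← sameCycle_apply_right, mul_apply, apply_symm_apply]
    by_cases hza : z = a
    · rw [hza, swap_apply_left]
    · have hzb : z ≠ b := fun hzb => h (hzb ▸ haz)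
      rw [swap_apply_of_ne_of_ne hza hzb]
      exact hz haz
  have hstart : g.symm a ∈ s := fun _ => by
    rw [← sameCycle_apply_right, mul_apply, apply_symm_apply, swap_apply_left]
  exact SameCycle.mem_of_mapsTo hs (sameCycle_apply_left.mpr .rfl) hstart .rfl

theorem not_sameCycle_swap_mul_of_sameCycle [Finite α] (hab : a ≠ b) (h : g.SameCycle a b) :
    ¬ (swap a b * g).SameCycle a b := by
  have hex : ∃ k, 0 < k ∧ (g ^ k) a = b := by
    obtain ⟨k, -, hk⟩ := h.exists_pow_eq'
    exact ⟨k, Nat.pos_of_ne_zero (by rintro rfl; exact hab hk), hk⟩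
  classical
  obtain ⟨k, ⟨hk0, hkb⟩, hmin⟩ : ∃ k, (0 < k ∧ (g ^ k) a = b) ∧
      ∀ j, 0 < j → j < k → (g ^ j) a ≠ b :=
    ⟨Nat.find hex, Nat.find_spec hex, fun j hj hjk hjb => Nat.find_min hex hjk ⟨hj, hjb⟩⟩
  have hret : ∀ j, 0 < j → j < k → (g ^ j) a ≠ a := by
    intro j hj hjk hja
    refine hmin (k - j) (by omega) (by omega) ?_
    rw [← hkb, ← Nat.sub_add_cancel hjk.le, pow_add, mul_apply, hja, Nat.sub_add_cancel hjk.le]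
  -- The arc `a, g a, …, g^(k-1) a` before `b = g^k a` is closed under `swap a b * g`.
  have hs : Set.MapsTo (swap a b * g) {z | ∃ i < k, (g ^ i) a = z}
      {z | ∃ i < k, (g ^ i) a = z} := by
    rintro _ ⟨i, hi, rfl⟩
    rw [mul_apply, ← mul_apply g, ← pow_succ']
    rcases (Nat.succ_le_of_lt hi).eq_or_lt with hik | hik
    · rw [show i + 1 = k from hik, hkb, swap_apply_right]
      exact ⟨0, hk0, pow_zero g ▸ rfl⟩
    · exact ⟨i + 1, hik, (swap_apply_of_ne_of_ne (hret _ i.succ_pos hik)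
        (hmin _ i.succ_pos hik)).symm⟩
  intro hsc
  obtain ⟨i, hi, hib⟩ := hsc.mem_of_mapsTo hs ⟨0, hk0, rfl⟩
  rcases i.eq_zero_or_pos with rfl | hi0
  · exact hab hib
  · exact hmin i hi0 hi hib

theorem sameCycle_swap_mul_iff [Finite α] {p q : α} (h : ¬ g.SameCycle a b) :
    (swap a b * g).SameCycle p q ↔ g.SameCycle p q ∨
      ((g.SameCycle p a ∨ g.SameCycle p b) ∧ (g.SameCycle q a ∨ g.SameCycle q b)) := by
  have hstep : ∀ z, g.SameCycle z (g z) := fun _ => sameCycle_apply_right.2 .rfl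
  constructor
  · refine fun hpq => hpq.mem_of_mapsTo (s := {z | g.SameCycle p z ∨
      ((g.SameCycle p a ∨ g.SameCycle p b) ∧ (g.SameCycle z a ∨ g.SameCycle z b))})
      (fun z hz => ?_) (.inl .rfl)
    have hp : g z = a ∨ g z = b → g.SameCycle p a ∨ g.SameCycle p b := by
      rintro (hz' | hz') <;> rcases hz with hpz | ⟨hp, -⟩
      exacts [.inl (hz' ▸ hpz.trans (hstep z)), hp, .inr (hz' ▸ hpz.trans (hstep z)), hp]
    by_cases hza : g z = a
    · rw [mul_apply, hza, swap_apply_left]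
      exact .inr ⟨hp (.inl hza), .inr .rfl⟩
    by_cases hzb : g z = b
    · rw [mul_apply, hzb, swap_apply_right]
      exact .inr ⟨hp (.inr hzb), .inl .rfl⟩
    rw [mul_apply, swap_apply_of_ne_of_ne hza hzb]
    simpa only [Set.mem_ofPred_eq, sameCycle_apply_left, sameCycle_apply_right] using hz
  · have hba := sameCycle_swap_mul_of_not_sameCycle h
    have hrefine : ∀ z, (swap a b * g).SameCycle z (g z) := by
      intro z
      have hz : (swap a b * g).SameCycle z (swap a b (g z)) := sameCycle_apply_right.2 .rfl
      by_cases hza : g z = a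
      · rw [hza, swap_apply_left] at hz
        exact hza ▸ hz.trans hba
      by_cases hzb : g z = b
      · rw [hzb, swap_apply_right] at hz
        exact hzb ▸ hz.trans hba.symm
      rwa [swap_apply_of_ne_of_ne hza hzb] at hz
    have hclass : ∀ z, g.SameCycle z a ∨ g.SameCycle z b → (swap a b * g).SameCycle z a := by
      rintro z (hz | hz)
      · exact hz.of_forall_sameCycle_apply hrefine
      · exact (hz.of_forall_sameCycle_apply hrefine).trans hba
    rintro (hpq | ⟨hp, hq⟩)
    · exact hpq.of_forall_sameCycle_apply hrefine
    · exact (hclass p hp).trans (hclass q hq).symm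

end Equiv.Perm

section CycleCount

variable {α : Type*}

theorem cycleCount_one : cycleCount (1 : Perm α) = Nat.card α :=
  (Nat.card_eq_of_bijective (Quotient.mk (SameCycle.setoid 1))
    ⟨fun _ _ h => sameCycle_one.1 (Quotient.exact h), Quotient.mk_surjective⟩).symm

variable [Finite α]

theorem cycleCount_le_card (g : Perm α) : cycleCount g ≤ Nat.card α :=
  Nat.card_le_card_of_surjective (Quotient.mk (SameCycle.setoid g)) Quotient.mk_surjective

variable [DecidableEq α]

theorem cycleCount_eq_cycleCount_swap_mul_add_one {g : Perm α} {a b : α}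
    (h : ¬ g.SameCycle a b) : cycleCount g = cycleCount (swap a b * g) + 1 :=
  Setoid.card_quotient_eq_add_one_of_merge (r := SameCycle.setoid g)
    (s := SameCycle.setoid (swap a b * g)) h (fun _ _ => sameCycle_swap_mul_iff h)

theorem cycleCount_swap_mul_of_sameCycle {g : Perm α} {a b : α} (hab : a ≠ b)
    (h : g.SameCycle a b) : cycleCount (swap a b * g) = cycleCount g + 1 := by
  simpa [← mul_assoc] using
    cycleCount_eq_cycleCount_swap_mul_add_one (not_sameCycle_swap_mul_of_sameCycle hab h)

theorem cycleCount_swap_mul_le (g : Perm α) (a b : α) :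
    cycleCount (swap a b * g) ≤ cycleCount g + 1 := by
  by_cases h : g.SameCycle a b
  · rcases eq_or_ne a b with rfl | hab
    · rw [swap_self, ← Perm.one_def, one_mul]
      omega
    · exact (cycleCount_swap_mul_of_sameCycle hab h).le
  · rw [cycleCount_eq_cycleCount_swap_mul_add_one h]
    omega

omit [DecidableEq α] in
theorem cycleCount_add_cycleCount_le (u v : Perm α) :
    cycleCount u + cycleCount v ≤ Nat.card α + cycleCount (u * v) := by
  classical
  by_cases hu : u = 1
  · rw [hu, cycleCount_one, one_mul]
  obtain ⟨a, ha⟩ : ∃ a, u a ≠ a := by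
    by_contra! h
    exact hu (Equiv.ext h)
  -- Split the cycle of `u` through `a`, recurse, and merge back at the cost of one cycle.
  have hsplit := cycleCount_swap_mul_of_sameCycle (Ne.symm ha) (sameCycle_apply_right.2 .rfl)
  have hmerge := cycleCount_swap_mul_le (u * v) a (u a)
  have := cycleCount_le_card (swap a (u a) * u)
  have := cycleCount_add_cycleCount_le (swap a (u a) * u) v
  rw [mul_assoc] at this
  omega
termination_by Nat.card α - cycleCount u

end CycleCount

section Geodesic

variable {α : Type*}

theorem cayley_self (g : Perm α) : cayley g g = 0 := by
  rw [cayley, mul_inv_cancel, cycleCount_one, Nat.sub_self]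

variable [Finite α]

-- Along a geodesic `g h⁻¹ = (g k⁻¹) (k h⁻¹)` splits the cycle count exactly, so a transposition
-- that splits a cycle of `g k⁻¹` cannot merge two cycles of `g h⁻¹`.
theorem sameCycle_mul_inv_of_mem_geodesic {g h k : Perm α} (hk : k ∈ geodesic g h) {a b : α}
    (hab : a ≠ b) (hgk : (g * k⁻¹).SameCycle a b) : (g * h⁻¹).SameCycle a b := by
  classical
  by_contra hgh
  have hsplit := cycleCount_swap_mul_of_sameCycle hab hgk
  have hmerge := cycleCount_eq_cycleCount_swap_mul_add_one hgh
  have hsub := cycleCount_add_cycleCount_le (swap a b * (g * k⁻¹)) (k * h⁻¹)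
  rw [show swap a b * (g * k⁻¹) * (k * h⁻¹) = swap a b * (g * h⁻¹) by group] at hsub
  have := cycleCount_le_card (g * k⁻¹)
  have := cycleCount_le_card (k * h⁻¹)
  have := cycleCount_le_card (g * h⁻¹)
  simp only [geodesic, cayley, Set.mem_ofPred_eq] at hk
  omega

theorem geodesic_inter_geodesic_one_eq_singleton {gA gB : Perm α}
    (hsep : ∀ a b, gA.SameCycle a b → (gA * gB⁻¹).SameCycle a b → a = b) :
    geodesic gA gB ∩ geodesic gA 1 = {gA} := by
  ext k
  refine ⟨fun ⟨hB, h1⟩ => ?_, ?_⟩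
  · by_contra hne
    obtain ⟨a, ha⟩ : ∃ a, (gA * k⁻¹) a ≠ a := by
      by_contra! h
      exact hne (mul_inv_eq_one.1 (Equiv.ext h)).symm
    have hx : (gA * k⁻¹).SameCycle a ((gA * k⁻¹) a) := sameCycle_apply_right.2 .rfl
    refine ha (hsep _ _ ?_ (sameCycle_mul_inv_of_mem_geodesic hB (Ne.symm ha) hx)).symm
    simpa using sameCycle_mul_inv_of_mem_geodesic h1 (Ne.symm ha) hx
  · rintro rfl
    simp [geodesic, cayley_self]

end Geodesic

def IsBlockRotation (m n : ℕ) (g : Equiv.Perm (ZMod (m * n))) : Prop :=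
  ∀ q r : ℕ, r < m →
    g ((q * m + r : ℕ) : ZMod (m * n)) = ((q * m + (r + 1) % m : ℕ) : ZMod (m * n))

section BlockRotation

variable {m n : ℕ} [NeZero m] [NeZero n]

theorem ZMod.eq_of_val_div_eq_of_castHom_eq {z w : ZMod (m * n)} (hdiv : z.val / m = w.val / m)
    (hmod : ZMod.castHom (dvd_mul_right m n) (ZMod m) z =
      ZMod.castHom (dvd_mul_right m n) (ZMod m) w) : z = w := by
  simp only [ZMod.castHom_apply, ZMod.cast_eq_val, ZMod.natCast_eq_natCast_iff'] at hmod
  exact ZMod.val_injective _ (by rw [← Nat.div_add_mod z.val m, hdiv, hmod, Nat.div_add_mod])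

variable {g : Perm (ZMod (m * n))}

theorem IsBlockRotation.val_apply (hg : IsBlockRotation m n g) (z : ZMod (m * n)) :
    (g z).val = z.val / m * m + (z.val % m + 1) % m := by
  have hm := NeZero.pos m
  have h := hg (z.val / m) (z.val % m) (Nat.mod_lt _ hm)
  rw [Nat.div_add_mod', ZMod.natCast_zmod_val] at h
  rw [h, ZMod.val_cast_of_lt]
  have hq : z.val / m < n := Nat.div_lt_of_lt_mul z.val_lt
  have hr := Nat.mod_lt (z.val % m + 1) hm
  nlinarith

theorem IsBlockRotation.val_div_apply (hg : IsBlockRotation m n g) (z : ZMod (m * n)) :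
    (g z).val / m = z.val / m := by
  have hm := NeZero.pos m
  rw [hg.val_apply, Nat.add_comm, Nat.add_mul_div_right _ _ hm,
    Nat.div_eq_of_lt (Nat.mod_lt _ hm), Nat.zero_add]

theorem IsBlockRotation.castHom_apply (hg : IsBlockRotation m n g) (z : ZMod (m * n)) :
    ZMod.castHom (dvd_mul_right m n) (ZMod m) (g z) =
      ZMod.castHom (dvd_mul_right m n) (ZMod m) z + 1 := by
  rw [ZMod.castHom_apply, ZMod.castHom_apply, ZMod.cast_eq_val, ZMod.cast_eq_val, hg.val_apply]
  conv_rhs => rw [← Nat.div_add_mod' z.val m]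
  push_cast
  simp [ZMod.natCast_mod]

-- `g` preserves the block index, and `(t g t⁻¹) g⁻¹` preserves the residue mod `m`, since both
-- `g` and its translate `t g t⁻¹` add `1` to it; together these two coordinates determine a point.
theorem IsBlockRotation.eq_of_sameCycle (hg : IsBlockRotation m n g) (c : ZMod (m * n))
    {a b : ZMod (m * n)} (hA : (Equiv.addLeft c * g * (Equiv.addLeft c)⁻¹).SameCycle a b)
    (hAB : (Equiv.addLeft c * g * (Equiv.addLeft c)⁻¹ * g⁻¹).SameCycle a b) : a = b := by
  have hblock :=
    (sameCycle_conj.1 hA).apply_eq_of_forall_apply_eq (φ := fun z => z.val / m) hg.val_div_apply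
  have hres := hAB.apply_eq_of_forall_apply_eq
      (φ := ZMod.castHom (dvd_mul_right m n) (ZMod m)) fun y => by
    have h := hg.castHom_apply (g⁻¹ y)
    rw [coe_inv, apply_symm_apply] at h
    simp only [neg_addLeft, coe_mul, coe_addLeft, coe_inv, Function.comp_apply, map_add, map_neg,
      hg.castHom_apply, h]
    ring
  refine (Equiv.addLeft c)⁻¹.injective (ZMod.eq_of_val_div_eq_of_castHom_eq hblock ?_)
  simp only [neg_addLeft, coe_addLeft, map_add, hres]

end BlockRotation

theorem stmt12_general (n m : ℕ) (hn : 1 ≤ n) (hm : 2 ≤ m)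
    (gB gA : Equiv.Perm (ZMod (m * n)))
(hgB : ∀ q r : ℕ, r < m →
      gB ((q * m + r : ℕ) : ZMod (m * n)) = ((q * m + (r + 1) % m : ℕ) : ZMod (m * n)))
    (hgA : gA = Equiv.addLeft ((m / 2 : ℕ) : ZMod (m * n)) * gB *
      (Equiv.addLeft ((m / 2 : ℕ) : ZMod (m * n)))⁻¹)
    :
    geodesic gA gB ∩ geodesic gA 1 = {gA} := by
  have : NeZero m := ⟨by omega⟩
  have : NeZero n := ⟨by omega⟩
  subst hgA
  exact geodesic_inter_geodesic_one_eq_singleton fun _ _ hA hAB =>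
    IsBlockRotation.eq_of_sameCycle hgB _ hA hAB

/-- The intersection of Cayley geodesics `Γ(g_A,g_B) ∩ Γ(g_A,e)` is `{g_A}`. -/
theorem stmt12 (n m : ℕ) (hn : 1 ≤ n) (hm : 2 ≤ m) (hme : Even m)
    (gB gA : Equiv.Perm (ZMod (m * n)))
(hgB : ∀ q r : ℕ, r < m →
      gB ((q * m + r : ℕ) : ZMod (m * n)) = ((q * m + (r + 1) % m : ℕ) : ZMod (m * n)))
    (hgA : gA = Equiv.addLeft ((m / 2 : ℕ) : ZMod (m * n)) * gB *
      (Equiv.addLeft ((m / 2 : ℕ) : ZMod (m * n)))⁻¹)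
    :
    geodesic gA gB ∩ geodesic gA 1 = {gA} :=
  stmt12_general n m hn hm gB gA hgB hgA
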